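/- arXiv:1109.6056 — 7 statements merged into one kernel-verified Lean document; each statement's English description precedes it below -/
import Mathlib

section
/- Let V be a finite-dimensional real vector space with the canonical pairing ⟨⟨(X,α),(X',α')⟩⟩ := α'(X) + α(X') on V × V*. If Δ ⊆ V is a subspace and ω : V → V* is a linear map satisfying ω(v)(w) = -ω(w)(v) for all v,w (i.e., ω is skew), then the subspace D := { (v, α) ∈ V × V* : v ∈ Δ and α - ω(v) ∈ Δ° } (where Δ° is the annihilator of Δ) satisfies D^⊥ = D, where D^⊥ := { (X,α) : ⟨⟨(X,α),(X',α')⟩⟩ = 0 for all (X',α') ∈ D }. That is, D is a (linear) Dirac structure. -/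
/-! For `(v, α), (w, β) ∈ D` the pairing splits as
`β v + α w = (β - ω w) v + (α - ω v) w + (ω w v + ω v w)`, and all three terms vanish, so `D`
is isotropic. Conversely, if `(v, α)` is orthogonal to `D`, testing against `(0, φ)` with
`φ ∈ Δ°` gives `φ v = 0`, hence `v ∈ Δ`; testing against `(w, ω w)` with `w ∈ Δ` gives
`(α - ω v) w = 0` by skewness, hence `α - ω v ∈ Δ°`. -/

namespace LinearDirac

open Module

section CommRing

variable {R V : Type*} [CommRing R] [AddCommGroup V] [Module R V]

def orthogonal (D : Set (V × Dual R V)) : Set (V × Dual R V) :=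
  {p | ∀ q ∈ D, q.2 p.1 + p.2 q.1 = 0}

def inducedDirac (Δ : Submodule R V) (ω : V →ₗ[R] Dual R V) : Set (V × Dual R V) :=
  {p | p.1 ∈ Δ ∧ p.2 - ω p.1 ∈ Δ.dualAnnihilator}

variable {Δ : Submodule R V} {ω : V →ₗ[R] Dual R V}

theorem graph_mem_inducedDirac {w : V} (hw : w ∈ Δ) : (w, ω w) ∈ inducedDirac Δ ω :=
  ⟨hw, by simp⟩

theorem inducedDirac_subset_orthogonal (hω : ∀ v w : V, ω v w = -ω w v) :
    inducedDirac Δ ω ⊆ orthogonal (inducedDirac Δ ω) := by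
  rintro ⟨v, α⟩ ⟨hv, hα⟩ ⟨w, β⟩ ⟨hw, hβ⟩
  rw [Submodule.mem_dualAnnihilator] at hα hβ
  have hβv : β v - ω w v = 0 := hβ v hv
  have hαw : α w - ω v w = 0 := hα w hw
  linear_combination hβv + hαw + hω v w

theorem sub_mem_dualAnnihilator_of_mem_orthogonal (hω : ∀ v w : V, ω v w = -ω w v)
    {p : V × Dual R V} (hp : p ∈ orthogonal (inducedDirac Δ ω)) :
    p.2 - ω p.1 ∈ Δ.dualAnnihilator := by
  rw [Submodule.mem_dualAnnihilator]
  intro w hw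
  have hpw : ω w p.1 + p.2 w = 0 := hp _ (graph_mem_inducedDirac hw)
  rw [LinearMap.sub_apply, hω]
  linear_combination hpw

end CommRing

section Field

variable {K V : Type*} [Field K] [AddCommGroup V] [Module K V]
  {Δ : Submodule K V} {ω : V →ₗ[K] Dual K V}

theorem fst_mem_of_mem_orthogonal {p : V × Dual K V}
    (hp : p ∈ orthogonal (inducedDirac Δ ω)) : p.1 ∈ Δ := by
  rw [← Subspace.forall_mem_dualAnnihilator_apply_eq_zero_iff]
  intro φ hφ
  simpa using hp (0, φ) ⟨Δ.zero_mem, by simpa using hφ⟩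

theorem orthogonal_inducedDirac (hω : ∀ v w : V, ω v w = -ω w v) :
    orthogonal (inducedDirac Δ ω) = inducedDirac Δ ω :=
  Set.Subset.antisymm
    (fun _ hp => ⟨fst_mem_of_mem_orthogonal hp, sub_mem_dualAnnihilator_of_mem_orthogonal hω hp⟩)
    (inducedDirac_subset_orthogonal hω)

end Field

end LinearDirac

theorem stmt_0_general {V : Type*} [AddCommGroup V] [Module ℝ V]
    (Δ : Submodule ℝ V) (ω : V →ₗ[ℝ] Module.Dual ℝ V)
    (hω : ∀ v w : V, ω v w = - ω w v) :
    (let D : Set (V × Module.Dual ℝ V) :=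
      {p | p.1 ∈ Δ ∧ p.2 - ω p.1 ∈ Δ.dualAnnihilator};
     {p : V × Module.Dual ℝ V | ∀ q ∈ D, q.2 p.1 + p.2 q.1 = 0} = D) :=
  LinearDirac.orthogonal_inducedDirac hω

/-- The induced Dirac structure `D = {(v,α) : v ∈ Δ, α - ω v ∈ Δ°}` on a
finite-dimensional real vector space, with ω skew, satisfies `D^⊥ = D`. -/
theorem stmt_0 {V : Type*} [AddCommGroup V] [Module ℝ V] [FiniteDimensional ℝ V]
    (Δ : Submodule ℝ V) (ω : V →ₗ[ℝ] Module.Dual ℝ V)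
    (hω : ∀ v w : V, ω v w = - ω w v) :
    (let D : Set (V × Module.Dual ℝ V) :=
      {p | p.1 ∈ Δ ∧ p.2 - ω p.1 ∈ Δ.dualAnnihilator};
     {p : V × Module.Dual ℝ V | ∀ q ∈ D, q.2 p.1 + p.2 q.1 = 0} = D) :=
  stmt_0_general Δ ω hω
end

section
/- Let Q = ℝⁿ, and let L : ℝⁿ × ℝⁿ → ℝ be a smooth Lagrangian with Δ(q) ⊆ ℝⁿ a subspace for each q. Suppose a smooth curve (q(t), v(t), p(t)) in ℝⁿ × ℝⁿ × ℝⁿ satisfies the Lagrange–Dirac equations: p(t) = ∂L/∂v(q(t),v(t)), q'(t) = v(t), q'(t) ∈ Δ(q(t)), and p'(t) - ∂L/∂q(q(t),v(t)) ∈ Δ(q(t))°. Then the generalized energy E(q,v,p) := ⟨p,v⟩ - L(q,v) is constant along the curve, i.e., d/dt [⟨p(t),v(t)⟩ - L(q(t),v(t))] = 0. -/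
/-- Energy conservation for Lagrange–Dirac systems on `Q = ℝⁿ`. -/
theorem stmt_2 (n : ℕ) (L : (Fin n → ℝ) → (Fin n → ℝ) → ℝ)
    (hL : ContDiff ℝ (⊤ : ℕ∞) (fun x : (Fin n → ℝ) × (Fin n → ℝ) => L x.1 x.2))
    (Δ : (Fin n → ℝ) → Submodule ℝ (Fin n → ℝ))
    (q v p v' p' : ℝ → Fin n → ℝ)
    (hq : ∀ t, HasDerivAt q (v t) t)
    (hv : ∀ t, HasDerivAt v (v' t) t)
    (hp : ∀ t, HasDerivAt p (p' t) t)
    (hΔ : ∀ t, v t ∈ Δ (q t))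
    (hLeg : ∀ t, ∀ w : Fin n → ℝ, fderiv ℝ (L (q t)) (v t) w = ∑ i, p t i * w i)
    (hforce : ∀ t, ∀ w ∈ Δ (q t),
      ∑ i, p' t i * w i - fderiv ℝ (fun x => L x (v t)) (q t) w = 0) :
    ∀ t, HasDerivAt (fun s => (∑ i, p s i * v s i) - L (q s) (v s)) 0 t := by
  intro t
  set F : (Fin n → ℝ) × (Fin n → ℝ) → ℝ := fun x => L x.1 x.2 with hF
  have hFd : Differentiable ℝ F := hL.differentiable (by simp)
  set F' : ((Fin n → ℝ) × (Fin n → ℝ)) →L[ℝ] ℝ := fderiv ℝ F (q t, v t) with hF'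
  have hFD : HasFDerivAt F F' (q t, v t) := (hFd (q t, v t)).hasFDerivAt
  -- partial derivatives
  have hpart1 : fderiv ℝ (fun x => L x (v t)) (q t) =
      F'.comp (ContinuousLinearMap.inl ℝ _ _) := by
    have h1 : HasFDerivAt (fun x : Fin n → ℝ => (x, v t))
        (ContinuousLinearMap.inl ℝ (Fin n → ℝ) (Fin n → ℝ)) (q t) :=
      (hasFDerivAt_id _).prodMk (hasFDerivAt_const _ _)
    exact (hFD.comp (q t) h1).fderiv
  have hpart2 : fderiv ℝ (L (q t)) (v t) =
      F'.comp (ContinuousLinearMap.inr ℝ _ _) := by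
    have h1 : HasFDerivAt (fun y : Fin n → ℝ => (q t, y))
        (ContinuousLinearMap.inr ℝ (Fin n → ℝ) (Fin n → ℝ)) (v t) :=
      (hasFDerivAt_const _ _).prodMk (hasFDerivAt_id _)
    exact (hFD.comp (v t) h1).fderiv
  -- derivative of L along the curve
  have hcurve : HasDerivAt (fun s => (q s, v s)) (v t, v' t) t := (hq t).prodMk (hv t)
  have hLd : HasDerivAt (fun s => L (q s) (v s)) (F' (v t, v' t)) t :=
    by have := hFD.comp_hasDerivAt t hcurve; exact this
  -- derivative of the pairing
  have hpv : HasDerivAt (fun s => ∑ i, p s i * v s i)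
      (∑ i, (p' t i * v t i + p t i * v' t i)) t := by
    apply HasDerivAt.fun_sum
    intro i _
    exact ((hasDerivAt_pi.1 (hp t)) i).mul ((hasDerivAt_pi.1 (hv t)) i)
  have key : HasDerivAt (fun s => (∑ i, p s i * v s i) - L (q s) (v s))
      ((∑ i, (p' t i * v t i + p t i * v' t i)) - F' (v t, v' t)) t := hpv.sub hLd
  have hsplit : F' (v t, v' t) = F' (v t, 0) + F' (0, v' t) := by
    rw [← map_add]
    congr 1
    simp [Prod.ext_iff]
  have h1 : F' (v t, 0) = ∑ i, p' t i * v t i := by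
    have := hforce t (v t) (hΔ t)
    have h := hpart1
    have : fderiv ℝ (fun x => L x (v t)) (q t) (v t) = ∑ i, p' t i * v t i := by
      linarith [hforce t (v t) (hΔ t)]
    rw [hpart1] at this
    simpa using this
  have h2 : F' (0, v' t) = ∑ i, p t i * v' t i := by
    have := hLeg t (v' t)
    rw [hpart2] at this
    simpa using this
  have : (∑ i, (p' t i * v t i + p t i * v' t i)) - F' (v t, v' t) = 0 := by
    rw [hsplit, h1, h2, Finset.sum_add_distrib]
    ring
  rwa [this] at key
end

section
/- Let Q = ℝⁿ, L : ℝⁿ × ℝⁿ → ℝ smooth, Δ ⊆ ℝⁿ a fixed subspace (constant distribution). Let 𝒳 : ℝⁿ → ℝⁿ and γ : ℝⁿ → ℝⁿ be smooth maps such that for all q: (i) 𝒳(q) ∈ Δ and γ(q) = ∂L/∂v(q, 𝒳(q)); (ii) the Jacobian of γ is symmetric when restricted to Δ, i.e., ⟨Dγ(q)v, w⟩ = ⟨Dγ(q)w, v⟩ for all v, w ∈ Δ; and (iii) the Dirac–Hamilton–Jacobi equation holds: for all w ∈ Δ, ⟨D(E ∘ Υ)(q), w⟩ = 0, where E∘Υ(q)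 := ⟨γ(q), 𝒳(q)⟩ - L(q, 𝒳(q)). Then for every integral curve c of 𝒳 (c'(t) = 𝒳(c(t))), the curve t ↦ (c(t), 𝒳(c(t)), γ(c(t))) satisfies the Lagrange–Dirac equations: p = ∂L/∂v, q' = v ∈ Δ, and p' - ∂L/∂q(q,v) ∈ Δ°. -/
/-- Dirac–Hamilton–Jacobi theorem, implication (ii) ⟹ (i), for a constant
distribution on `Q = ℝⁿ`. -/
theorem stmt_3 (n : ℕ) (L : (Fin n → ℝ) → (Fin n → ℝ) → ℝ)
    (hL : ContDiff ℝ (⊤ : ℕ∞) (fun x : (Fin n → ℝ) × (Fin n → ℝ) => L x.1 x.2))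
    (Δ : Submodule ℝ (Fin n → ℝ))
    (𝒳 γ : (Fin n → ℝ) → (Fin n → ℝ))
    (h𝒳 : ContDiff ℝ (⊤ : ℕ∞) 𝒳) (hγ : ContDiff ℝ (⊤ : ℕ∞) γ)
    (hΔ : ∀ q, 𝒳 q ∈ Δ)
    (hLeg : ∀ q, ∀ w : Fin n → ℝ, fderiv ℝ (L q) (𝒳 q) w = ∑ i, γ q i * w i)
    (hsym : ∀ q, ∀ v ∈ Δ, ∀ w ∈ Δ,
      ∑ i, fderiv ℝ γ q v i * w i = ∑ i, fderiv ℝ γ q w i * v i)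
    (hHJ : ∀ q, ∀ w ∈ Δ,
      fderiv ℝ (fun x => (∑ i, γ x i * 𝒳 x i) - L x (𝒳 x)) q w = 0) :
    ∀ c : ℝ → Fin n → ℝ, (∀ t, HasDerivAt c (𝒳 (c t)) t) →
      ∀ t, 𝒳 (c t) ∈ Δ ∧
        (∀ w : Fin n → ℝ, fderiv ℝ (L (c t)) (𝒳 (c t)) w = ∑ i, γ (c t) i * w i) ∧
        ∃ p' : Fin n → ℝ, HasDerivAt (fun s => γ (c s)) p' t ∧
          ∀ w ∈ Δ, ∑ i, p' i * w i - fderiv ℝ (fun x => L x (𝒳 (c t))) (c t) w = 0 := by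
  intro c hc t
  set q := c t with hq
  have hF : HasFDerivAt (fun x : (Fin n → ℝ) × (Fin n → ℝ) => L x.1 x.2)
      (fderiv ℝ (fun x : (Fin n → ℝ) × (Fin n → ℝ) => L x.1 x.2) (q, 𝒳 q)) (q, 𝒳 q) :=
    (hL.differentiable (by simp) _).hasFDerivAt
  set DF := fderiv ℝ (fun x : (Fin n → ℝ) × (Fin n → ℝ) => L x.1 x.2) (q, 𝒳 q) with hDF
  have hγd : HasFDerivAt γ (fderiv ℝ γ q) q := (hγ.differentiable (by simp) q).hasFDerivAt
  have h𝒳d : HasFDerivAt 𝒳 (fderiv ℝ 𝒳 q) q := (h𝒳.differentiable (by simp) q).hasFDerivAt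
  set Dγ := fderiv ℝ γ q with hDγ
  set DX := fderiv ℝ 𝒳 q with hDX
  have H1 : HasFDerivAt (L q) (DF.comp (ContinuousLinearMap.inr ℝ _ _)) (𝒳 q) :=
    by exact hF.comp (𝒳 q) (hasFDerivAt_prodMk_right q (𝒳 q))
  have H2 : HasFDerivAt (fun x => L x (𝒳 q)) (DF.comp (ContinuousLinearMap.inl ℝ _ _)) q :=
    by exact hF.comp (g := fun x : (Fin n → ℝ) × (Fin n → ℝ) => L x.1 x.2) q (hasFDerivAt_prodMk_left (𝕜 := ℝ) q (𝒳 q))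
  have hγi : ∀ i : Fin n, HasFDerivAt (fun x => γ x i)
      ((ContinuousLinearMap.proj i).comp Dγ) q :=
    fun i => by exact ((ContinuousLinearMap.proj (R := ℝ) (φ := fun _ : Fin n => ℝ) i).hasFDerivAt).comp q hγd
  have h𝒳i : ∀ i : Fin n, HasFDerivAt (fun x => 𝒳 x i)
      ((ContinuousLinearMap.proj i).comp DX) q :=
    fun i => by exact ((ContinuousLinearMap.proj (R := ℝ) (φ := fun _ : Fin n => ℝ) i).hasFDerivAt).comp q h𝒳d
  have hterm : ∀ i : Fin n, HasFDerivAt (fun x => γ x i * 𝒳 x i)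
      (γ q i • ((ContinuousLinearMap.proj i).comp DX)
        + 𝒳 q i • ((ContinuousLinearMap.proj i).comp Dγ)) q :=
    fun i => (hγi i).mul (h𝒳i i)
  have hsum : HasFDerivAt (fun x => ∑ i, γ x i * 𝒳 x i)
      (∑ i, (γ q i • ((ContinuousLinearMap.proj i).comp DX)
        + 𝒳 q i • ((ContinuousLinearMap.proj i).comp Dγ))) q :=
    HasFDerivAt.fun_sum (fun i _ => hterm i)
  have hcomp : HasFDerivAt (fun x => L x (𝒳 x))
      (DF.comp ((ContinuousLinearMap.id ℝ (Fin n → ℝ)).prod DX)) q :=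
    hF.comp (g := fun x : (Fin n → ℝ) × (Fin n → ℝ) => L x.1 x.2) q ((hasFDerivAt_id q).prodMk h𝒳d)
  have hg := (hsum.fun_sub hcomp).fderiv
  -- key identity
  have key : ∀ w ∈ Δ, ∑ i, 𝒳 q i * Dγ w i = DF (w, 0) := by
    intro w hw
    have h0 := hHJ q w hw
    rw [hg] at h0
    simp only [ContinuousLinearMap.sub_apply, ContinuousLinearMap.sum_apply,
      ContinuousLinearMap.add_apply, ContinuousLinearMap.smul_apply,
      ContinuousLinearMap.comp_apply, ContinuousLinearMap.proj_apply,
      ContinuousLinearMap.prod_apply, ContinuousLinearMap.id_apply,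
      smul_eq_mul] at h0
    have hsplit : DF (w, DX w) = DF (w, 0) + DF (0, DX w) := by
      rw [← map_add]
      congr 1
      simp [Prod.ext_iff]
    have hDF2 : DF (0, DX w) = ∑ i, γ q i * DX w i := by
      have := hLeg q (DX w)
      rw [H1.fderiv] at this
      simpa using this
    rw [hsplit, hDF2] at h0
    rw [Finset.sum_add_distrib] at h0
    linarith
  refine ⟨hΔ q, hLeg q, Dγ (𝒳 q), hγd.comp_hasDerivAt t (hc t), ?_⟩
  intro w hw
  have h1 := hsym q (𝒳 q) (hΔ q) w hw
  rw [← hDγ] at h1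
  have h2 := key w hw
  rw [H2.fderiv]
  simp only [ContinuousLinearMap.comp_apply, ContinuousLinearMap.inl_apply]
  rw [h1, ← h2]
  ring_nf
  rw [Finset.sum_congr rfl (fun i _ => mul_comm (Dγ w i) (𝒳 q i))]
  ring
end

section
/- Let Q = ℝⁿ, L : ℝⁿ × ℝⁿ → ℝ smooth, Δ ⊆ ℝⁿ a fixed subspace. Let 𝒳 : ℝⁿ → ℝⁿ and γ : ℝⁿ → ℝⁿ be smooth with 𝒳(q) ∈ Δ and γ(q) = ∂L/∂v(q,𝒳(q)) for all q, and suppose ⟨Dγ(q)v,w⟩ = ⟨Dγ(q)w,v⟩ for v,w ∈ Δ. Assume that for every q₀ ∈ ℝⁿ there is an integral curve c of 𝒳 with c(0) = q₀ such that t ↦ (c(t), 𝒳(c(t)), γ(c(t))) satisfies the Lagrange–Dirac equations (p' - ∂L/∂q ∈ Δ°). Then 𝒳, γ satisfy the Dirac–Hamilton–Jacobi equation: ⟨D(E∘Υ)(q), w⟩ = 0 for all q and all w ∈ Δ, where E∘Υ(q) = ⟨γ(q), 𝒳(q)⟩ - L(q,𝒳(q)). -/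
/-- Dirac–Hamilton–Jacobi theorem, converse implication (i) ⟹ (ii), for a
constant distribution on `Q = ℝⁿ`. -/
theorem stmt_4 (n : ℕ) (L : (Fin n → ℝ) → (Fin n → ℝ) → ℝ)
    (hL : ContDiff ℝ (⊤ : ℕ∞) (fun x : (Fin n → ℝ) × (Fin n → ℝ) => L x.1 x.2))
    (Δ : Submodule ℝ (Fin n → ℝ))
    (𝒳 γ : (Fin n → ℝ) → (Fin n → ℝ))
    (h𝒳 : ContDiff ℝ (⊤ : ℕ∞) 𝒳) (hγ : ContDiff ℝ (⊤ : ℕ∞) γ)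
    (hΔ : ∀ q, 𝒳 q ∈ Δ)
    (hLeg : ∀ q, ∀ w : Fin n → ℝ, fderiv ℝ (L q) (𝒳 q) w = ∑ i, γ q i * w i)
    (hsym : ∀ q, ∀ v ∈ Δ, ∀ w ∈ Δ,
      ∑ i, fderiv ℝ γ q v i * w i = ∑ i, fderiv ℝ γ q w i * v i)
    (hsol : ∀ q₀ : Fin n → ℝ, ∃ c : ℝ → Fin n → ℝ, c 0 = q₀ ∧
      (∀ t, HasDerivAt c (𝒳 (c t)) t) ∧
      ∀ t, ∃ p' : Fin n → ℝ, HasDerivAt (fun s => γ (c s)) p' t ∧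
        ∀ w ∈ Δ, ∑ i, p' i * w i - fderiv ℝ (fun x => L x (𝒳 (c t))) (c t) w = 0) :
    ∀ q : Fin n → ℝ, ∀ w ∈ Δ,
      fderiv ℝ (fun x => (∑ i, γ x i * 𝒳 x i) - L x (𝒳 x)) q w = 0 := by
  intro q w hw
  obtain ⟨c, hc0, hc', hdir⟩ := hsol q
  obtain ⟨p', hp', hDirac⟩ := hdir 0
  have hγd : Differentiable ℝ γ := hγ.differentiable (by simp)
  have h𝒳d : Differentiable ℝ 𝒳 := h𝒳.differentiable (by simp)
  have hLd : Differentiable ℝ (fun x : (Fin n → ℝ) × (Fin n → ℝ) => L x.1 x.2) :=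
    hL.differentiable (by simp)
  set A := fderiv ℝ γ q with hA
  set B := fderiv ℝ 𝒳 q with hB
  set DL := fderiv ℝ (fun x : (Fin n → ℝ) × (Fin n → ℝ) => L x.1 x.2) (q, 𝒳 q) with hDL
  have hγq : HasFDerivAt γ A q := (hγd q).hasFDerivAt
  have h𝒳q : HasFDerivAt 𝒳 B q := (h𝒳d q).hasFDerivAt
  have hDLq : HasFDerivAt (fun x : (Fin n → ℝ) × (Fin n → ℝ) => L x.1 x.2) DL (q, 𝒳 q) :=
    (hLd _).hasFDerivAt
  -- p' = A (𝒳 q)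
  have hchain : HasDerivAt (fun s => γ (c s)) (A (𝒳 q)) 0 := by
    have h1 : HasFDerivAt γ A (c 0) := by rw [hc0]; exact hγq
    have := h1.comp_hasDerivAt 0 (hc' 0)
    rwa [hc0] at this
  have hp'eq : p' = A (𝒳 q) := hp'.unique hchain
  -- derivative of x ↦ L x (𝒳 x)
  have hcomp : HasFDerivAt (fun x => L x (𝒳 x))
      (DL.comp ((ContinuousLinearMap.id ℝ (Fin n → ℝ)).prod B)) q :=
    by have := hDLq.comp q (HasFDerivAt.prodMk (hasFDerivAt_id q) h𝒳q); exact this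
  -- derivative of each product term
  have hterm : ∀ i : Fin n, HasFDerivAt (fun x => γ x i * 𝒳 x i)
      ((γ q i) • ((ContinuousLinearMap.proj i).comp B)
        + (𝒳 q i) • ((ContinuousLinearMap.proj i).comp A)) q := by
    intro i
    have h1 : HasFDerivAt (fun x => γ x i)
        ((ContinuousLinearMap.proj i).comp A) q :=
      ((ContinuousLinearMap.proj (R := ℝ) (φ := fun _ : Fin n => ℝ) i).hasFDerivAt).comp q hγq
    have h2 : HasFDerivAt (fun x => 𝒳 x i)
        ((ContinuousLinearMap.proj i).comp B) q :=
      ((ContinuousLinearMap.proj (R := ℝ) (φ := fun _ : Fin n => ℝ) i).hasFDerivAt).comp q h𝒳q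
    exact h1.mul h2
  have hsum : HasFDerivAt (fun x => ∑ i, γ x i * 𝒳 x i)
      (∑ i : Fin n, ((γ q i) • ((ContinuousLinearMap.proj i).comp B)
        + (𝒳 q i) • ((ContinuousLinearMap.proj i).comp A))) q :=
    HasFDerivAt.fun_sum (fun i _ => hterm i)
  have hF := hsum.fun_sub hcomp
  rw [hF.fderiv]
  -- partial derivative in the second slot
  have hpart2 : ∀ v : Fin n → ℝ, fderiv ℝ (L q) (𝒳 q) v = DL (0, v) := by
    intro v
    have hin : HasFDerivAt (fun v : Fin n → ℝ => ((q, v) : (Fin n → ℝ) × (Fin n → ℝ)))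
        ((0 : (Fin n → ℝ) →L[ℝ] (Fin n → ℝ)).prod (ContinuousLinearMap.id ℝ _)) (𝒳 q) :=
      (hasFDerivAt_const q _).prodMk (hasFDerivAt_id _)
    have h := (hDLq.comp (𝒳 q) hin).fderiv
    have : fderiv ℝ (L q) (𝒳 q) = DL.comp
        ((0 : (Fin n → ℝ) →L[ℝ] (Fin n → ℝ)).prod (ContinuousLinearMap.id ℝ _)) := h
    rw [this]
    simp
  -- partial derivative in the first slot
  have hpart1 : fderiv ℝ (fun x => L x (𝒳 q)) q w = DL (w, 0) := by
    have hin : HasFDerivAt (fun x : Fin n → ℝ => ((x, 𝒳 q) : (Fin n → ℝ) × (Fin n → ℝ)))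
        ((ContinuousLinearMap.id ℝ _).prod (0 : (Fin n → ℝ) →L[ℝ] (Fin n → ℝ))) q :=
      HasFDerivAt.prodMk (hasFDerivAt_id _) (hasFDerivAt_const _ _)
    have h := (hDLq.comp q hin).fderiv
    have h2 : fderiv ℝ (fun x => L x (𝒳 q)) q = DL.comp
        ((ContinuousLinearMap.id ℝ _).prod (0 : (Fin n → ℝ) →L[ℝ] (Fin n → ℝ))) := h
    rw [h2]
    simp
  -- Dirac equation gives DL (w, 0)
  have hDir := hDirac w hw
  rw [hc0] at hDir
  have hDir' : ∑ i, A (𝒳 q) i * w i = DL (w, 0) := by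
    rw [← hpart1, ← hp'eq]
    linarith [hDir]
  -- symmetry
  have hsymq := hsym q w hw (𝒳 q) (hΔ q)
  rw [← hA] at hsymq
  -- Legendre
  have hLegq : DL (0, B w) = ∑ i, γ q i * B w i := by
    rw [← hpart2]; exact hLeg q (B w)
  have hsplit : DL (w, B w) = DL (w, 0) + DL (0, B w) := by
    have : ((w, B w) : (Fin n → ℝ) × (Fin n → ℝ))
        = (w, (0 : Fin n → ℝ)) + ((0 : Fin n → ℝ), B w) := by
      simp [Prod.ext_iff]
    rw [this, map_add]
  simp only [ContinuousLinearMap.sub_apply, ContinuousLinearMap.sum_apply,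
    ContinuousLinearMap.add_apply, ContinuousLinearMap.smul_apply,
    ContinuousLinearMap.comp_apply, ContinuousLinearMap.proj_apply,
    ContinuousLinearMap.coe_id', id_eq, ContinuousLinearMap.prod_apply,
    smul_eq_mul]
  rw [hsplit, hLegq, Finset.sum_add_distrib]
  have h1 : ∑ i, 𝒳 q i * A w i = ∑ i, A (𝒳 q) i * w i := by
    rw [← hsymq]; exact Finset.sum_congr rfl (fun i _ => mul_comm _ _)
  rw [h1, hDir']
  ring
end

section
/- Let Q = ℝⁿ, L smooth, Δ ⊆ ℝⁿ a subspace, and let Υ = (𝒳, γ) satisfy the ansatz 𝒳(q) ∈ Δ and γ(q) = ∂L/∂v(q,𝒳(q)). Then the differential of E∘Υ(q) = ⟨γ(q),𝒳(q)⟩ - L(q,𝒳(q)) is given componentwise by ∂_j(E∘Υ)(q) = Σ_i ∂_j γ_i(q) · 𝒳^i(q) - ∂L/∂q^j(q, 𝒳(q)); i.e., all terms involving derivatives of 𝒳 cancel. -/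
/-- Key computational lemma: under the ansatz `γ(q) = ∂L/∂v(q, 𝒳(q))`, all
terms involving derivatives of `𝒳` cancel in `d(E∘Υ)`. -/
theorem stmt_5 (n : ℕ) (L : (Fin n → ℝ) → (Fin n → ℝ) → ℝ)
    (hL : ContDiff ℝ (⊤ : ℕ∞) (fun x : (Fin n → ℝ) × (Fin n → ℝ) => L x.1 x.2))
    (𝒳 γ : (Fin n → ℝ) → (Fin n → ℝ))
    (h𝒳 : ContDiff ℝ (⊤ : ℕ∞) 𝒳) (hγ : ContDiff ℝ (⊤ : ℕ∞) γ)
    (hLeg : ∀ q, ∀ w : Fin n → ℝ, fderiv ℝ (L q) (𝒳 q) w = ∑ i, γ q i * w i) :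
    ∀ (q : Fin n → ℝ) (j : Fin n),
      fderiv ℝ (fun x => (∑ i, γ x i * 𝒳 x i) - L x (𝒳 x)) q (Pi.single j 1) =
        (∑ i, fderiv ℝ γ q (Pi.single j 1) i * 𝒳 q i)
          - fderiv ℝ (fun x => L x (𝒳 q)) q (Pi.single j 1) := by
  intro q j
  set v : Fin n → ℝ := Pi.single j 1 with hv
  have hLd : Differentiable ℝ (fun x : (Fin n → ℝ) × (Fin n → ℝ) => L x.1 x.2) :=
    hL.differentiable (by simp)
  have h𝒳d : Differentiable ℝ 𝒳 := h𝒳.differentiable (by simp)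
  have hγd : Differentiable ℝ γ := hγ.differentiable (by simp)
  set D := fderiv ℝ (fun x : (Fin n → ℝ) × (Fin n → ℝ) => L x.1 x.2) (q, 𝒳 q) with hD
  -- derivative of x ↦ (x, 𝒳 x)
  have hpair : HasFDerivAt (fun x : Fin n → ℝ => (x, 𝒳 x))
      ((ContinuousLinearMap.id ℝ (Fin n → ℝ)).prod (fderiv ℝ 𝒳 q)) q :=
    HasFDerivAt.prodMk (hasFDerivAt_id q) (h𝒳d q).hasFDerivAt
  have hcomp : HasFDerivAt (fun x => L x (𝒳 x))
      (D.comp ((ContinuousLinearMap.id ℝ (Fin n → ℝ)).prod (fderiv ℝ 𝒳 q))) q :=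
    by have := (hLd (q, 𝒳 q)).hasFDerivAt.comp q hpair; exact this
  have hq : HasFDerivAt (fun x => L x (𝒳 q))
      (D.comp (ContinuousLinearMap.inl ℝ (Fin n → ℝ) (Fin n → ℝ))) q :=
    by have := (hLd (q, 𝒳 q)).hasFDerivAt.comp q (hasFDerivAt_prodMk_left (𝕜 := ℝ) q (𝒳 q)); exact this
  have hw : HasFDerivAt (L q)
      (D.comp (ContinuousLinearMap.inr ℝ (Fin n → ℝ) (Fin n → ℝ))) (𝒳 q) :=
    (hLd (q, 𝒳 q)).hasFDerivAt.comp (𝒳 q) (hasFDerivAt_prodMk_right q (𝒳 q))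
  have hterm : ∀ i : Fin n, HasFDerivAt (fun x => γ x i * 𝒳 x i)
      ((γ q i) • ((ContinuousLinearMap.proj i).comp (fderiv ℝ 𝒳 q))
        + (𝒳 q i) • ((ContinuousLinearMap.proj i).comp (fderiv ℝ γ q))) q := by
    intro i
    have hγi : HasFDerivAt (fun x => γ x i)
        ((ContinuousLinearMap.proj i).comp (fderiv ℝ γ q)) q :=
      ((ContinuousLinearMap.proj (R := ℝ) (φ := fun _ : Fin n => ℝ) i).hasFDerivAt).comp q
        (hγd q).hasFDerivAt
    have h𝒳i : HasFDerivAt (fun x => 𝒳 x i)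
        ((ContinuousLinearMap.proj i).comp (fderiv ℝ 𝒳 q)) q :=
      ((ContinuousLinearMap.proj (R := ℝ) (φ := fun _ : Fin n => ℝ) i).hasFDerivAt).comp q
        (h𝒳d q).hasFDerivAt
    exact hγi.mul h𝒳i
  have hsum : HasFDerivAt (fun x => ∑ i, γ x i * 𝒳 x i)
      (∑ i, ((γ q i) • ((ContinuousLinearMap.proj i).comp (fderiv ℝ 𝒳 q))
        + (𝒳 q i) • ((ContinuousLinearMap.proj i).comp (fderiv ℝ γ q)))) q :=
    HasFDerivAt.fun_sum (fun i _ => hterm i)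
  have htot := (hsum.fun_sub hcomp).fderiv
  rw [htot]
  have hqf := hq.fderiv
  rw [hqf]
  have hDsplit : D (v, fderiv ℝ 𝒳 q v) = D (v, 0) + D (0, fderiv ℝ 𝒳 q v) := by
    rw [← map_add]
    congr 1
    ext <;> simp
  have hLegv : D (0, fderiv ℝ 𝒳 q v) = ∑ i, γ q i * fderiv ℝ 𝒳 q v i := by
    rw [← hLeg q (fderiv ℝ 𝒳 q v)]
    rw [hw.fderiv]
    rfl
  simp only [ContinuousLinearMap.sub_apply, ContinuousLinearMap.sum_apply,
    ContinuousLinearMap.add_apply, ContinuousLinearMap.smul_apply,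
    ContinuousLinearMap.comp_apply, ContinuousLinearMap.prod_apply,
    ContinuousLinearMap.id_apply, ContinuousLinearMap.proj_apply,
    ContinuousLinearMap.inl_apply, Pi.prod, id_eq, smul_eq_mul]
  rw [hDsplit, hLegv, Finset.sum_add_distrib,
    Finset.sum_congr rfl (fun i _ => mul_comm (𝒳 q i) (fderiv ℝ γ q v i))]
  ring_nf
end

section
/- Let Ω be a skew-symmetric bilinear form on a finite-dimensional vector space V, let G act on V by a linear map Φ preserving Ω (Φ*Ω = Ω), let H ⊆ V be a Φ-invariant subspace (Φ(H) = H). Define D := {(v,α) ∈ V × V* : v ∈ H, α - Ω^♭(v) ∈ H°}. Then D is invariant under the map (v,α) ↦ (Φv, (Φ^{-1})*α), where (Φ^{-1})*α := α ∘ Φ^{-1}. -/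
open Module

section

variable {R M : Type*} [CommSemiring R] [AddCommMonoid M] [Module R M]

theorem LinearMap.apply_linearEquiv_eq_comp_symm {N : Type*} [AddCommMonoid N] [Module R N]
    (B : M →ₗ[R] M →ₗ[R] N) (e : M ≃ₗ[R] M) (hB : ∀ v w, B (e v) (e w) = B v w) (v : M) :
    B (e v) = (B v).comp (e.symm : M →ₗ[R] M) := by
  ext w
  simpa using hB v (e.symm w)

theorem Submodule.comp_symm_mem_dualAnnihilator {W : Submodule R M} {e : M ≃ₗ[R] M}
    (hW : W.map (e : M →ₗ[R] M) = W) {φ : Dual R M} (hφ : φ ∈ W.dualAnnihilator) :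
    φ.comp (e.symm : M →ₗ[R] M) ∈ W.dualAnnihilator := by
  have hcomap : W.comap (e.symm : M →ₗ[R] M) = W :=
    (Submodule.map_equiv_eq_comap_symm e W).symm.trans hW
  rw [← hcomap]
  exact Submodule.dualAnnihilator_map_dualMap_le _ _ (Submodule.mem_map_of_mem hφ)

end

theorem stmt_15_general {V : Type*} [AddCommGroup V] [Module ℝ V]
    (Ω : V →ₗ[ℝ] V →ₗ[ℝ] ℝ)
    (Φ : V ≃ₗ[ℝ] V) (hΦΩ : ∀ v w : V, Ω (Φ v) (Φ w) = Ω v w)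
    (H : Submodule ℝ V) (hΦH : Submodule.map (Φ : V →ₗ[ℝ] V) H = H) :
    ∀ p : V × Module.Dual ℝ V,
      (p.1 ∈ H ∧ p.2 - Ω p.1 ∈ H.dualAnnihilator) →
      (Φ p.1 ∈ H ∧ (p.2.comp (Φ.symm : V →ₗ[ℝ] V)) - Ω (Φ p.1) ∈ H.dualAnnihilator) := by
  rintro ⟨v, α⟩ ⟨hv, hα⟩
  refine ⟨hΦH ▸ Submodule.mem_map_of_mem hv, ?_⟩
  rw [LinearMap.apply_linearEquiv_eq_comp_symm Ω Φ hΦΩ, ← LinearMap.sub_comp]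
  exact Submodule.comp_symm_mem_dualAnnihilator hΦH hα

/-- Invariance of the constrained Dirac structure under a symmetry preserving
the two-form and the constraint subspace. -/
theorem stmt_15 {V : Type*} [AddCommGroup V] [Module ℝ V] [FiniteDimensional ℝ V]
    (Ω : V →ₗ[ℝ] V →ₗ[ℝ] ℝ) (hskew : ∀ v w : V, Ω v w = - Ω w v)
    (Φ : V ≃ₗ[ℝ] V) (hΦΩ : ∀ v w : V, Ω (Φ v) (Φ w) = Ω v w)
    (H : Submodule ℝ V) (hΦH : Submodule.map (Φ : V →ₗ[ℝ] V) H = H) :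
    ∀ p : V × Module.Dual ℝ V,
      (p.1 ∈ H ∧ p.2 - Ω p.1 ∈ H.dualAnnihilator) →
      (Φ p.1 ∈ H ∧ (p.2.comp (Φ.symm : V →ₗ[ℝ] V)) - Ω (Φ p.1) ∈ H.dualAnnihilator) :=
  stmt_15_general Ω Φ hΦΩ H hΦH
end

section
/- Consider the reduced roller racer Hamiltonian H̄(θ, φ, p_θ, p_φ) = (1/(2I₁))[p_θ - (1 + (d₁/d₂)cos φ) p_φ]² + (sin²φ/(2m₁d₂²)) p_φ², with m₁, I₁, d₁, d₂ > 0. Let C = d₂√(m₁(2E - I₁v_θ²)) for constants E, v_θ with 2E > I₁v_θ², and define γ̄_φ(φ) = C csc φ and γ̄_θ(φ) = C(1 + (d₁/d₂)cos φ)csc φ + √(I₁(2E - C²/(m₁d₂²))). Then H̄(θ, φ, γ̄_θ(φ), γ̄_φ(φ)) = E for all (θ, φ) with sin φ ≠ 0. -/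
/-!
Along `γ̄` the first bracket of `H̄` collapses to the constant `√(I₁(2E - C²/(m₁d₂²)))`, and the
`csc φ` in `γ̄_φ` cancels the `sin² φ` of the second term, so `H̄ ∘ γ̄` is the constant
`(2E - C²/(m₁d₂²))/2 + C²/(2m₁d₂²) = E`. The only condition is that the square root is taken of a
nonnegative number, which holds because `C²/(m₁d₂²) = 2E - I₁v_θ²`.
-/

open Real

/-- `H̄(θ, φ, p_θ, p_φ)`, which does not depend on `θ`. -/
noncomputable def rollerRacerHamiltonian (m₁ I₁ d₁ d₂ φ pθ pφ : ℝ) : ℝ :=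
  (1/(2*I₁)) * (pθ - (1 + (d₁/d₂) * cos φ) * pφ)^2 + ((sin φ)^2/(2*m₁*d₂^2)) * pφ^2

theorem rollerRacerHamiltonian_csc (m₁ I₁ d₁ d₂ C p φ : ℝ) (hs : sin φ ≠ 0) :
    rollerRacerHamiltonian m₁ I₁ d₁ d₂ φ
        (C * (1 + (d₁/d₂) * cos φ) / sin φ + p) (C / sin φ)
      = p^2 / (2*I₁) + C^2 / (2*m₁*d₂^2) := by
  unfold rollerRacerHamiltonian
  have hshift : C * (1 + (d₁/d₂) * cos φ) / sin φ + p - (1 + (d₁/d₂) * cos φ) * (C / sin φ)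
      = p := by ring
  rw [hshift, div_pow, div_mul_div_comm, mul_comm ((sin φ)^2),
    mul_div_mul_right _ _ (pow_ne_zero 2 hs)]
  ring

theorem rollerRacerHamiltonian_csc_eq (m₁ I₁ d₁ d₂ E C φ : ℝ) (hI : I₁ ≠ 0)
    (hK : 0 ≤ I₁ * (2*E - C^2/(m₁*d₂^2))) (hs : sin φ ≠ 0) :
    rollerRacerHamiltonian m₁ I₁ d₁ d₂ φ
        (C * (1 + (d₁/d₂) * cos φ) / sin φ + √(I₁ * (2*E - C^2/(m₁*d₂^2)))) (C / sin φ)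
      = E := by
  rw [rollerRacerHamiltonian_csc _ _ _ _ _ _ _ hs, sq_sqrt hK]
  field_simp
  ring

theorem sq_div_eq_of_eq_mul_sqrt {m d a C : ℝ} (hm : 0 < m) (hd : d ≠ 0) (ha : 0 ≤ a)
    (hC : C = d * √(m * a)) : C^2 / (m * d^2) = a := by
  rw [hC, mul_pow, sq_sqrt (mul_nonneg hm.le ha)]
  field_simp

theorem stmt_18_general (m₁ I₁ d₁ d₂ E vθ : ℝ) (hm : 0 < m₁) (hI : 0 < I₁)
    (hd₂ : 0 < d₂) (hE : I₁ * vθ^2 < 2*E)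
    (C : ℝ) (hC : C = d₂ * Real.sqrt (m₁ * (2*E - I₁*vθ^2)))
    (γφ γθ : ℝ → ℝ)
    (hγφ : ∀ φ, γφ φ = C / Real.sin φ)
    (hγθ : ∀ φ, γθ φ = C * (1 + (d₁/d₂) * Real.cos φ) / Real.sin φ
      + Real.sqrt (I₁ * (2*E - C^2/(m₁*d₂^2)))) :
    ∀ θ φ : ℝ, Real.sin φ ≠ 0 →
      (1/(2*I₁)) * (γθ φ - (1 + (d₁/d₂) * Real.cos φ) * γφ φ)^2
      + ((Real.sin φ)^2/(2*m₁*d₂^2)) * (γφ φ)^2 = E := by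
  intro _ φ hs
  have hK : C^2 / (m₁ * d₂^2) = 2*E - I₁*vθ^2 :=
    sq_div_eq_of_eq_mul_sqrt hm hd₂.ne' (by linarith) hC
  have hK_nonneg : 0 ≤ I₁ * (2*E - C^2/(m₁*d₂^2)) := by
    rw [hK, sub_sub_cancel]; positivity
  rw [hγφ, hγθ]
  exact rollerRacerHamiltonian_csc_eq m₁ I₁ d₁ d₂ E C φ hI.ne' hK_nonneg hs

/-- The explicit one-form constructed for the simplified roller racer solves the
reduced Dirac–Hamilton–Jacobi equation `H̄ ∘ γ̄ = E`. -/
theorem stmt_18 (m₁ I₁ d₁ d₂ E vθ : ℝ) (hm : 0 < m₁) (hI : 0 < I₁)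
    (hd₁ : 0 < d₁) (hd₂ : 0 < d₂) (hE : I₁ * vθ^2 < 2*E)
    (C : ℝ) (hC : C = d₂ * Real.sqrt (m₁ * (2*E - I₁*vθ^2)))
    (γφ γθ : ℝ → ℝ)
    (hγφ : ∀ φ, γφ φ = C / Real.sin φ)
    (hγθ : ∀ φ, γθ φ = C * (1 + (d₁/d₂) * Real.cos φ) / Real.sin φ
      + Real.sqrt (I₁ * (2*E - C^2/(m₁*d₂^2)))) :
    ∀ θ φ : ℝ, Real.sin φ ≠ 0 →
      (1/(2*I₁)) * (γθ φ - (1 + (d₁/d₂) * Real.cos φ) * γφ φ)^2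
      + ((Real.sin φ)^2/(2*m₁*d₂^2)) * (γφ φ)^2 = E :=
  stmt_18_general m₁ I₁ d₁ d₂ E vθ hm hI hd₂ hE C hC γφ γθ hγφ hγθ
end
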